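/- Under the setting of the KB distribution theorem, the first-order approximations of the node-level KB statistics for rows i and j, namely X_i = (I-A)^{-1}_{i·} Δ (I-A)^{-1} w and X_j = (I-A)^{-1}_{j·} Δ (I-A)^{-1} w, have covariance Cov(X_i, X_j) = [(I-A)^{-1}w]^⊤ C^{(ij)} (I-A)^{-1}w, where C^{(ij)}_{lk} = (I-A)^{-1}_{i·} Σ_{lk} [(I-A)^{-1}_{j·}]^⊤. -/

import Mathlib

open Matrix MeasureTheory ProbabilityTheory
open scoped ENNReal NNReal

/-- Spectral radius of a real square matrix, via the complex spectrum. -/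
noncomputable def specRad {M : ℕ} (A : Matrix (Fin M) (Fin M) ℝ) : ℝ≥0∞ :=
  spectralRadius ℂ (A.map (algebraMap ℝ ℂ))

/-!
Each entry of `((I - A)⁻¹ Δ) (I - A)⁻¹ w` is a linear combination of the entries of `Δ`, with
coefficients `(I - A)⁻¹_{ip} ((I - A)⁻¹ w)_l`. The mixed second moment of two such entries is
therefore, by linearity of the integral, the bilinear form of these coefficients against the
second moments `∫ Δ_{pl} Δ_{qk} = Σ_{lk}(p, q)`.
-/

theorem integral_sum_mul_sum {Ω ι κ : Type*} [MeasurableSpace Ω] [Fintype ι] [Fintype κ]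
    (P : Measure Ω) (X : ι → Ω → ℝ) (Y : κ → Ω → ℝ) (c : ι → ℝ) (d : κ → ℝ)
    (hXY : ∀ a b, Integrable (fun ω => X a ω * Y b ω) P) :
    ∫ ω, (∑ a, c a * X a ω) * (∑ b, d b * Y b ω) ∂P =
      ∑ a, ∑ b, c a * d b * ∫ ω, X a ω * Y b ω ∂P := by
  have hexpand : ∀ ω, (∑ a, c a * X a ω) * (∑ b, d b * Y b ω) =
      ∑ a, ∑ b, c a * d b * (X a ω * Y b ω) := fun ω => by
    simp only [Finset.sum_mul_sum, mul_mul_mul_comm]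
  simp only [hexpand]
  rw [integral_finsetSum _ fun a _ => integrable_finsetSum _ fun b _ => (hXY a b).const_mul _]
  refine Finset.sum_congr rfl fun a _ => ?_
  rw [integral_finsetSum _ fun b _ => (hXY a b).const_mul _]
  simp only [integral_const_mul]

theorem Matrix.mul_mulVec_apply_eq_sum {R l m n : Type*} [CommSemiring R] [Fintype m] [Fintype n]
    (B : Matrix l n R) (D : Matrix n m R) (v : m → R) (i : l) :
    ((B * D) *ᵥ v) i = ∑ x : m × n, (v x.1 * B i x.2) * D x.2 x.1 := by
  simp only [mulVec, mul_apply, dotProduct, Fintype.sum_prod_type, Finset.sum_mul]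
  refine Finset.sum_congr rfl fun _ _ => Finset.sum_congr rfl fun _ _ => by ring

theorem integral_mul_mulVec_apply_mul_mul_mulVec_apply {Ω l m n : Type*} [MeasurableSpace Ω]
    [Fintype m] [Fintype n] (P : Measure Ω) (B : Matrix l n ℝ) (D : Ω → Matrix n m ℝ)
    (v : m → ℝ) (hD : ∀ p q r s, Integrable (fun ω => D ω p q * D ω r s) P) (i j : l) :
    ∫ ω, ((B * D ω) *ᵥ v) i * ((B * D ω) *ᵥ v) j ∂P =
      ∑ a, ∑ b, v a * (∑ p, ∑ q, B i p * (∫ ω, D ω p a * D ω q b ∂P) * B j q) * v b := by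
  simp only [mul_mulVec_apply_eq_sum B]
  rw [integral_sum_mul_sum P _ _ _ _ fun x y => hD x.2 x.1 y.2 y.1]
  simp only [Fintype.sum_prod_type, Finset.mul_sum, Finset.sum_mul]
  refine Finset.sum_congr rfl fun a _ => ?_
  rw [Finset.sum_comm]
  refine Finset.sum_congr rfl fun b _ => Finset.sum_congr rfl fun p _ =>
    Finset.sum_congr rfl fun q _ => by ring

theorem node_level_KB_covariance_general {M : ℕ} {Ω : Type*} [MeasurableSpace Ω]
    (P : Measure Ω)
    (A : Matrix (Fin M) (Fin M) ℝ) (w : Fin M → ℝ)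
    (Δ : Ω → Matrix (Fin M) (Fin M) ℝ)
    (hint : ∀ p q r s, Integrable (fun ω => Δ ω p q * Δ ω r s) P)
    (Sig : Fin M → Fin M → Matrix (Fin M) (Fin M) ℝ)
    (hSig : ∀ l k p q, Sig l k p q = ∫ ω, Δ ω p l * Δ ω q k ∂P)
    (i j : Fin M) :
    ∫ ω, (((1 - A)⁻¹ * Δ ω) *ᵥ ((1 - A)⁻¹ *ᵥ w)) i *
        (((1 - A)⁻¹ * Δ ω) *ᵥ ((1 - A)⁻¹ *ᵥ w)) j ∂P =
      ∑ l, ∑ k, ((1 - A)⁻¹ *ᵥ w) l *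
        (∑ p, ∑ q, (1 - A)⁻¹ i p * Sig l k p q * (1 - A)⁻¹ j q) *
          ((1 - A)⁻¹ *ᵥ w) k := by
  simpa only [hSig] using integral_mul_mulVec_apply_mul_mul_mulVec_apply P _ Δ _ hint i j

/-- Covariance structure of the first-order node-level KB statistics:
Cov(Xᵢ, Xⱼ) = [(I-A)⁻¹w]ᵀ C⁽ⁱʲ⁾ (I-A)⁻¹w with
C⁽ⁱʲ⁾_{lk} = (I-A)⁻¹_{i·} Σ_{lk} [(I-A)⁻¹_{j·}]ᵀ. -/
theorem node_level_KB_covariance {M : ℕ} {Ω : Type*} [MeasurableSpace Ω]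
    (P : Measure Ω) [IsProbabilityMeasure P]
    (A : Matrix (Fin M) (Fin M) ℝ) (hρ : specRad A < 1) (w : Fin M → ℝ)
    (Δ : Ω → Matrix (Fin M) (Fin M) ℝ)
    (hmeas : ∀ p q, Measurable (fun ω => Δ ω p q))
    (hmean : ∀ p q, ∫ ω, Δ ω p q ∂P = 0)
    (hint : ∀ p q r s, Integrable (fun ω => Δ ω p q * Δ ω r s) P)
    (Sig : Fin M → Fin M → Matrix (Fin M) (Fin M) ℝ)
    (hSig : ∀ l k p q, Sig l k p q = ∫ ω, Δ ω p l * Δ ω q k ∂P)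
    (i j : Fin M) :
    ∫ ω, (((1 - A)⁻¹ * Δ ω) *ᵥ ((1 - A)⁻¹ *ᵥ w)) i *
        (((1 - A)⁻¹ * Δ ω) *ᵥ ((1 - A)⁻¹ *ᵥ w)) j ∂P =
      ∑ l, ∑ k, ((1 - A)⁻¹ *ᵥ w) l *
        (∑ p, ∑ q, (1 - A)⁻¹ i p * Sig l k p q * (1 - A)⁻¹ j q) *
          ((1 - A)⁻¹ *ᵥ w) k :=
  node_level_KB_covariance_general P A w Δ hint Sig hSig i j
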